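/- arXiv:2504.09569 — 3 statements merged into one kernel-verified Lean document; each statement's English description precedes it below -/
import Mathlib

section
/- The mixed Weyl relations hold: xᵢᴸ ∂ⱼᴿ − ∂ⱼᴿ xᵢᴸ = 0 for i ≠ j, and xᵢᴸ ∂ᵢᴿ − ∂ᵢᴿ xᵢᴸ = −[1/2]_q (q^{1/2} γᵢ + q^{−1/2} γᵢ⁻¹) ωᵢ, where ωᵢ = γ₁⁻¹⋯γ_{i−1}⁻¹ γ_{i+1}⋯γₙ and [1/2]_q = (q^{1/2} − q^{−1/2})/(q − q^{−1}). -/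
noncomputable section

/-- Multi-indices for `n` q-commuting variables. -/
abbrev QIdx (n : ℕ) := Fin n →₀ ℕ

/-- A polynomial in the q-commutative algebra `A = ℂ⟨x₁,…,xₙ⟩/(xᵢxⱼ - q xⱼxᵢ, i<j)`,
represented by its coefficient function with respect to the ordered monomial basis
`x^α = x₁^{α₁}⋯xₙ^{αₙ}`. -/
abbrev QPoly (n : ℕ) := QIdx n → ℂ

/-- The symmetric q-number `[m]_q = (q^m - q^{-m})/(q - q⁻¹)` (as a complex scalar). -/
def qNum (q : ℝ) (m : ℤ) : ℂ := ((q : ℂ) ^ m - (q : ℂ) ^ (-m)) / ((q : ℂ) - (q : ℂ)⁻¹)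

/-- `∑_{j<i} αⱼ`. -/
def lowSum {n : ℕ} (i : Fin n) (α : QIdx n) : ℤ := ∑ j, if j < i then (α j : ℤ) else 0

/-- `∑_{j>i} αⱼ`. -/
def highSum {n : ℕ} (i : Fin n) (α : QIdx n) : ℤ := ∑ j, if i < j then (α j : ℤ) else 0

/-- `∑_j αⱼ`, the total degree. -/
def totSum {n : ℕ} (α : QIdx n) : ℤ := ∑ j, (α j : ℤ)

/-- The dilation operator `γᵢ : xᵢ ↦ q·xᵢ`; on monomials `γᵢ x^α = q^{αᵢ} x^α`. -/
def gam {n : ℕ} (q : ℝ) (i : Fin n) (f : QPoly n) : QPoly n :=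
  fun α => (q : ℂ) ^ (α i : ℤ) * f α

/-- The inverse dilation `γᵢ⁻¹`. -/
def gamInv {n : ℕ} (q : ℝ) (i : Fin n) (f : QPoly n) : QPoly n :=
  fun α => (q : ℂ) ^ (-(α i : ℤ)) * f α

/-- The total dilation `γ = γ₁⋯γₙ`. -/
def gamAll {n : ℕ} (q : ℝ) (f : QPoly n) : QPoly n :=
  fun α => (q : ℂ) ^ totSum α * f α

/-- The inverse total dilation `γ⁻¹`. -/
def gamAllInv {n : ℕ} (q : ℝ) (f : QPoly n) : QPoly n :=
  fun α => (q : ℂ) ^ (-totSum α) * f α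

/-- `ωᵢ = γ₁⁻¹⋯γ_{i-1}⁻¹ γ_{i+1}⋯γₙ`; on monomials it multiplies by
`q^{∑_{j>i} αⱼ - ∑_{j<i} αⱼ}`. -/
def omegaOp {n : ℕ} (q : ℝ) (i : Fin n) (f : QPoly n) : QPoly n :=
  fun α => (q : ℂ) ^ (highSum i α - lowSum i α) * f α

/-- `ωᵢ⁻¹ = γ₁⋯γ_{i-1} γ_{i+1}⁻¹⋯γₙ⁻¹`. -/
def omegaInvOp {n : ℕ} (q : ℝ) (i : Fin n) (f : QPoly n) : QPoly n :=
  fun α => (q : ℂ) ^ (lowSum i α - highSum i α) * f α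

/-- Left multiplication by `xᵢ`:  `xᵢ · x^β = q^{-∑_{j<i} βⱼ} x^{β+δᵢ}` in `A`. -/
def xL {n : ℕ} (q : ℝ) (i : Fin n) (f : QPoly n) : QPoly n :=
  fun α => if α i = 0 then 0 else
    (q : ℂ) ^ (-(lowSum i α)) * f (α - Finsupp.single i 1)

/-- Right multiplication by `xᵢ`:  `x^β · xᵢ = q^{-∑_{j>i} βⱼ} x^{β+δᵢ}` in `A`. -/
def xR {n : ℕ} (q : ℝ) (i : Fin n) (f : QPoly n) : QPoly n :=
  fun α => if α i = 0 then 0 else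
    (q : ℂ) ^ (-(highSum i α)) * f (α - Finsupp.single i 1)

/-- The left partial q-difference operator `∂ᵢᴸ = (xᵢᴸ)⁻¹(γᵢ - γᵢ⁻¹)/(q - q⁻¹)`;
on monomials `∂ᵢᴸ x^α = [αᵢ]_q q^{∑_{j<i} αⱼ} x^{α-δᵢ}`. -/
def dL {n : ℕ} (q : ℝ) (i : Fin n) (f : QPoly n) : QPoly n :=
  fun α => qNum q (α i + 1) * (q : ℂ) ^ lowSum i α * f (α + Finsupp.single i 1)

/-- The right partial q-difference operator `∂ᵢᴿ = (xᵢᴿ)⁻¹(γᵢ - γᵢ⁻¹)/(q - q⁻¹)`;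
on monomials `∂ᵢᴿ x^α = [αᵢ]_q q^{∑_{j>i} αⱼ} x^{α-δᵢ}`. -/
def dR {n : ℕ} (q : ℝ) (i : Fin n) (f : QPoly n) : QPoly n :=
  fun α => qNum q (α i + 1) * (q : ℂ) ^ highSum i α * f (α + Finsupp.single i 1)

/-- The q-power picked up when reordering `x^α · x^β = q^(qExp α β) x^{α+β}`,
namely `qExp α β = -∑_{i>j} αᵢ βⱼ`. -/
def qExp {n : ℕ} (α β : QIdx n) : ℤ :=
  -∑ i, ∑ j, if j < i then (α i : ℤ) * (β j : ℤ) else 0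

/-- Multiplication in the q-commutative algebra `A`, in coefficient form. -/
def qMul {n : ℕ} (q : ℝ) (f g : QPoly n) : QPoly n :=
  fun α => ∑ p ∈ Finset.HasAntidiagonal.antidiagonal α, (q : ℂ) ^ qExp p.1 p.2 * f p.1 * g p.2

/-- The unit of `A`. -/
def qOne {n : ℕ} : QPoly n := fun α => if α = 0 then 1 else 0

/-- Powers in `A`. -/
def qPow {n : ℕ} (q : ℝ) (f : QPoly n) : ℕ → QPoly n
  | 0 => qOne
  | m + 1 => qMul q f (qPow q f m)

/-- The monomial `x^α` as an element of `A`. -/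
def mono {n : ℕ} (α : QIdx n) : QPoly n := fun β => if β = α then 1 else 0

/-- The variable `xᵢ` as an element of `A`. -/
def Xvar {n : ℕ} (i : Fin n) : QPoly n := mono (Finsupp.single i 1)

/-- The Q-radius `Q = x₁² + q⁻¹ x₂² + … + q^{-n+1} xₙ²` as an element of `A`. -/
def Qradius {n : ℕ} (q : ℝ) : QPoly n :=
  ∑ i : Fin n, (q : ℂ) ^ (-((i : ℕ) : ℤ)) • qMul q (Xvar i) (Xvar i)

/-- The operator `Q̂ᴸ = ∑ᵢ q^{-i+1}(xᵢᴸ)²` of left multiplication by the Q-radius. -/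
def QhatL {n : ℕ} (q : ℝ) (f : QPoly n) : QPoly n :=
  ∑ i : Fin n, (q : ℂ) ^ (-((i : ℕ) : ℤ)) • xL q i (xL q i f)

/-- The `U_q(o)`-invariant q-Laplacian `Δ_qᴿ = ∑ᵢ q^{n-i}(∂ᵢᴿ)²`. -/
def qLap {n : ℕ} (q : ℝ) (f : QPoly n) : QPoly n :=
  ∑ i : Fin n, (q : ℂ) ^ ((n : ℤ) - 1 - ((i : ℕ) : ℤ)) • dR q i (dR q i f)


/-- `√q` as a complex scalar. -/
def sqC (q : ℝ) : ℂ := Complex.ofReal (Real.sqrt q)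

/-!
On the monomial basis, `xᵢᴸ` and `∂ⱼᴿ` are weighted shifts of the multi-index by `±δ`.
For `i ≠ j` the q-powers picked up in the two orders cancel. For `i = j` both composites are
diagonal, with eigenvalues `[αᵢ]_q q^{h - l}` and `[αᵢ + 1]_q q^{h - l}` (`h`, `l` the degrees
above and below `i`), and `[m]_q - [m+1]_q = -[1/2]_q (q^{1/2} q^m + q^{-1/2} q^{-m})`.
-/

section MultiIndex

variable {n : ℕ}

lemma eq_zero_or_exists_eq_add_single (i : Fin n) (α : QIdx n) :
    α i = 0 ∨ ∃ β : QIdx n, α = β + Finsupp.single i 1 := by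
  refine (eq_or_ne (α i) 0).imp_right fun h => ⟨α - Finsupp.single i 1, ?_⟩
  rw [tsub_add_cancel_of_le (Finsupp.single_le_iff.mpr (Nat.one_le_iff_ne_zero.mpr h))]

lemma sum_ite_single (j : Fin n) (P : Fin n → Prop) [DecidablePred P] :
    (∑ k, if P k then ((Finsupp.single j 1 : QIdx n) k : ℤ) else 0) = if P j then 1 else 0 := by
  rw [Finset.sum_eq_single j (fun k _ hk => by simp [Ne.symm hk]) (by simp)]
  simp

lemma lowSum_add_single (i j : Fin n) (α : QIdx n) :
    lowSum i (α + Finsupp.single j 1) = lowSum i α + if j < i then 1 else 0 := by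
  rw [lowSum, lowSum, ← sum_ite_single j (· < i), ← Finset.sum_add_distrib]
  refine Finset.sum_congr rfl fun k _ => ?_
  split_ifs <;> simp

lemma highSum_add_single (i j : Fin n) (α : QIdx n) :
    highSum i (α + Finsupp.single j 1) = highSum i α + if i < j then 1 else 0 := by
  rw [highSum, highSum, ← sum_ite_single j (i < ·), ← Finset.sum_add_distrib]
  refine Finset.sum_congr rfl fun k _ => ?_
  split_ifs <;> simp

end MultiIndex

section Operators

variable {n : ℕ}

lemma xL_apply_of_eq_zero (q : ℝ) (i : Fin n) (f : QPoly n) {α : QIdx n} (h : α i = 0) :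
    xL q i f α = 0 := if_pos h

lemma xL_apply_add_single (q : ℝ) (i : Fin n) (f : QPoly n) (α : QIdx n) :
    xL q i f (α + Finsupp.single i 1) = (q : ℂ) ^ (-lowSum i α) * f α := by
  simp [xL, lowSum_add_single]

lemma xL_dR_comm {q : ℝ} (hq : q ≠ 0) {i j : Fin n} (hij : i ≠ j) (f : QPoly n) :
    xL q i (dR q j f) = dR q j (xL q i f) := by
  funext α
  obtain hα | ⟨β, rfl⟩ := eq_zero_or_exists_eq_add_single i α
  · have hα' : (α + Finsupp.single j 1 : QIdx n) i = 0 := by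
      simp [hα, Finsupp.single_eq_of_ne' hij.symm]
    rw [xL_apply_of_eq_zero q i _ hα, dR, xL_apply_of_eq_zero q i _ hα', mul_zero]
  · have hq' : (q : ℂ) ≠ 0 := by exact_mod_cast hq
    simp only [dR, add_right_comm β (Finsupp.single i 1), xL_apply_add_single,
      lowSum_add_single, highSum_add_single, Finsupp.add_apply, Finsupp.single_eq_of_ne' hij,
      add_zero]
    rw [neg_add, zpow_add₀ hq', zpow_add₀ hq', zpow_neg _ (ite _ _ _)]
    field_simp

lemma xL_dR_self_apply {q : ℝ} (hq : q ≠ 0) (i : Fin n) (f : QPoly n) (α : QIdx n) :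
    xL q i (dR q i f) α
      = qNum q (α i) * (q : ℂ) ^ (highSum i α - lowSum i α) * f α := by
  obtain hα | ⟨β, rfl⟩ := eq_zero_or_exists_eq_add_single i α
  · simp [xL_apply_of_eq_zero, hα, qNum]
  · have hq' : (q : ℂ) ≠ 0 := by exact_mod_cast hq
    simp only [xL_apply_add_single, dR, highSum_add_single, lowSum_add_single,
      Finsupp.add_apply, Finsupp.single_eq_same, lt_irrefl, if_false, add_zero]
    rw [zpow_sub₀ hq', zpow_neg]
    push_cast
    ring

lemma dR_xL_self_apply {q : ℝ} (hq : q ≠ 0) (i : Fin n) (f : QPoly n) (α : QIdx n) :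
    dR q i (xL q i f) α
      = qNum q (α i + 1) * (q : ℂ) ^ (highSum i α - lowSum i α) * f α := by
  have hq' : (q : ℂ) ≠ 0 := by exact_mod_cast hq
  rw [dR, xL_apply_add_single, zpow_sub₀ hq', zpow_neg]
  ring

end Operators

lemma sqC_mul_self {q : ℝ} (hq : 0 ≤ q) : sqC q * sqC q = q := by
  rw [sqC, ← Complex.ofReal_mul, Real.mul_self_sqrt hq]

-- With `s = √q` the numerator is `s^{2m} - s^{-2m} - s^{2m+2} + s^{-2m-2} = -(s - s⁻¹)(s^{2m+1} + s^{-2m-1})`.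
lemma qNum_sub_qNum_add_one {q : ℝ} (hq : 0 < q) (m : ℤ) :
    qNum q m - qNum q (m + 1)
      = -(((sqC q - (sqC q)⁻¹) / ((q : ℂ) - (q : ℂ)⁻¹)) *
          (sqC q * (q : ℂ) ^ m + (sqC q)⁻¹ * (q : ℂ) ^ (-m))) := by
  have hq' : (q : ℂ) ≠ 0 := by exact_mod_cast hq.ne'
  have hs : sqC q ≠ 0 := by
    intro h
    exact hq' (by rw [← sqC_mul_self hq.le, h, zero_mul])
  have ht : (q : ℂ) ^ m ≠ 0 := zpow_ne_zero m hq'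
  rw [qNum, qNum, zpow_add_one₀ hq', neg_add, zpow_add₀ hq', zpow_neg, zpow_neg, zpow_one]
  generalize (q : ℂ) ^ m = t at ht ⊢
  rw [← sqC_mul_self hq.le]
  field_simp
  ring

theorem mixed_weyl_relations_general (n : ℕ) (q : ℝ) (hq : 0 < q)
    (i j : Fin n) (hij : i ≠ j) :
    (∀ f : QPoly n, xL q i (dR q j f) - dR q j (xL q i f) = 0) ∧
    (∀ f : QPoly n, xL q i (dR q i f) - dR q i (xL q i f)
        = -(((sqC q - (sqC q)⁻¹) / ((q : ℂ) - (q : ℂ)⁻¹)) •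
            (sqC q • gam q i (omegaOp q i f) + (sqC q)⁻¹ • gamInv q i (omegaOp q i f)))) := by
  refine ⟨fun f => sub_eq_zero.mpr (xL_dR_comm hq.ne' hij f), fun f => ?_⟩
  funext α
  simp only [Pi.sub_apply, Pi.neg_apply, Pi.smul_apply, Pi.add_apply, smul_eq_mul,
    gam, gamInv, omegaOp, xL_dR_self_apply hq.ne', dR_xL_self_apply hq.ne']
  linear_combination (q : ℂ) ^ (highSum i α - lowSum i α) * f α *
    qNum_sub_qNum_add_one hq (α i)

/-- Mixed Weyl relations:
`xᵢᴸ ∂ⱼᴿ - ∂ⱼᴿ xᵢᴸ = 0` for `i ≠ j` and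
`xᵢᴸ ∂ᵢᴿ - ∂ᵢᴿ xᵢᴸ = -[1/2]_q (q^{1/2} γᵢ + q^{-1/2} γᵢ⁻¹) ωᵢ`. -/
theorem mixed_weyl_relations (n : ℕ) (q : ℝ) (hq : 0 < q) (hq1 : q ≠ 1)
    (i j : Fin n) (hij : i ≠ j) :
    (∀ f : QPoly n, xL q i (dR q j f) - dR q j (xL q i f) = 0) ∧
    (∀ f : QPoly n, xL q i (dR q i f) - dR q i (xL q i f)
        = -(((sqC q - (sqC q)⁻¹) / ((q : ℂ) - (q : ℂ)⁻¹)) •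
            (sqC q • gam q i (omegaOp q i f) + (sqC q)⁻¹ • gamInv q i (omegaOp q i f)))) :=
  mixed_weyl_relations_general n q hq i j hij
end
end

section
/- The commutator of the q-Laplacian with the k-th power of the left Q-radius multiplication operator is Δ_qᴿ (Q̂ᴸ)^k − (Q̂ᴸ)^k Δ_qᴿ = (Q̂ᴸ)^{k−1} [2k]_q {q^{2k+n−2} γ²}_q, where for an operator a, {a}_q = (a − a⁻¹)/(q − q⁻¹), and γ = γ₁⋯γₙ. -/
noncomputable section

/-!
Every operator involved acts diagonally on the monomial basis up to a shift of the multi-index,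
so everything reduces to identities between q-numbers. `∂ᵢᴿ` commutes with `xⱼᴸ` for `i ≠ j`,
hence `[Δ_qᴿ, Q̂ᴸ]` only sees the diagonal terms `[(∂ᵢᴿ)², (xᵢᴸ)²]`; on `x^α` these give
`[2]_q [2αᵢ + 1]_q` times a power of `q`, and the sum over `i` telescopes to `[2]_q [n + 2|α|]_q`,
i.e. `[Δ_qᴿ, Q̂ᴸ] = [2]_q {q^n γ²}_q`. Since `Q̂ᴸ` raises the degree by two,
`{q^e γ²}_q Q̂ᴸ = Q̂ᴸ {q^{e+4} γ²}_q`, and the Leibniz rule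
`[Δ, Q̂^{k+1}] = [Δ, Q̂] Q̂^k + Q̂ [Δ, Q̂^k]` gives the claim by induction on `k`, using
`[m]_q [x]_q + [2]_q [x + m + 2]_q = [m + 2]_q [x + 2]_q`.
-/

section QRadiusCommutator

variable {n : ℕ} {q : ℝ}

lemma zpow_mul_qNum (hq : q ≠ 0) (c b : ℤ) :
    (q : ℂ) ^ c * qNum q b = ((q : ℂ) ^ (c + b) - (q : ℂ) ^ (c - b)) / ((q : ℂ) - (q : ℂ)⁻¹) := by
  have hq' : (q : ℂ) ≠ 0 := Complex.ofReal_ne_zero.mpr hq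
  rw [qNum, mul_div_assoc', mul_sub, ← zpow_add₀ hq', ← zpow_add₀ hq', sub_eq_add_neg c b]

lemma qNum_mul_qNum (hq : q ≠ 0) (a b : ℤ) :
    qNum q a * qNum q b
      = ((q : ℂ) ^ (a + b) + (q : ℂ) ^ (-(a + b)) - (q : ℂ) ^ (a - b) - (q : ℂ) ^ (b - a))
          / ((q : ℂ) - (q : ℂ)⁻¹) ^ 2 := by
  have hq' : (q : ℂ) ≠ 0 := Complex.ofReal_ne_zero.mpr hq
  rw [qNum, qNum, div_mul_div_comm, sq]
  congr 1
  simp only [sub_mul, mul_sub, ← zpow_add₀ hq']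
  ring_nf

lemma qNum_add_one_mul_qNum_add_two_sub (hq : q ≠ 0) (m : ℤ) :
    qNum q (m + 1) * qNum q (m + 2) - qNum q (m - 1) * qNum q m
      = qNum q 2 * qNum q (2 * m + 1) := by
  simp only [qNum_mul_qNum hq]
  ring_nf

lemma qNum_mul_qNum_add_qNum_two_mul (hq : q ≠ 0) (m x : ℤ) :
    qNum q m * qNum q x + qNum q 2 * qNum q (x + m + 2) = qNum q (m + 2) * qNum q (x + 2) := by
  simp only [qNum_mul_qNum hq]
  ring_nf

lemma lowSum_add (j : Fin n) (α β : QIdx n) : lowSum j (α + β) = lowSum j α + lowSum j β := by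
  simp only [lowSum, Finsupp.add_apply, Nat.cast_add, ite_add_zero, Finset.sum_add_distrib]

lemma highSum_add (j : Fin n) (α β : QIdx n) : highSum j (α + β) = highSum j α + highSum j β := by
  simp only [highSum, Finsupp.add_apply, Nat.cast_add, ite_add_zero, Finset.sum_add_distrib]

lemma totSum_add (α β : QIdx n) : totSum (α + β) = totSum α + totSum β := by
  simp only [totSum, Finsupp.add_apply, Nat.cast_add, Finset.sum_add_distrib]

@[simp]
lemma lowSum_single (i j : Fin n) (m : ℕ) :
    lowSum j (Finsupp.single i m) = if i < j then (m : ℤ) else 0 := by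
  rw [lowSum, Finset.sum_eq_single i] <;> simp +contextual

@[simp]
lemma highSum_single (i j : Fin n) (m : ℕ) :
    highSum j (Finsupp.single i m) = if j < i then (m : ℤ) else 0 := by
  rw [highSum, Finset.sum_eq_single i] <;> simp +contextual

@[simp]
lemma totSum_single (i : Fin n) (m : ℕ) : totSum (Finsupp.single i m) = m := by
  simp [totSum, Finsupp.single_apply]

lemma map_tsub_single {φ : QIdx n → ℤ} (hφ : ∀ α β, φ (α + β) = φ α + φ β)
    {α : QIdx n} {i : Fin n} {m : ℕ} (h : m ≤ α i) :
    φ (α - Finsupp.single i m) = φ α - φ (Finsupp.single i m) := by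
  rw [eq_sub_iff_add_eq, ← hφ, tsub_add_cancel_of_le (Finsupp.single_le_iff.mpr h)]

lemma highSum_add_apply_add_lowSum (i : Fin n) (α : QIdx n) :
    highSum i α + α i + lowSum i α = totSum α := by
  have hαi : (α i : ℤ) = ∑ j, if j = i then (α j : ℤ) else 0 := by simp
  rw [hαi, highSum, lowSum, totSum, ← Finset.sum_add_distrib, ← Finset.sum_add_distrib]
  refine Finset.sum_congr rfl fun j _ => ?_
  rcases lt_trichotomy j i with h | rfl | h
  · simp [h, h.not_gt, h.ne]
  · simp
  · simp [h, h.not_gt, h.ne']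

/-- Indexed by `t : ℕ` rather than by `Fin n` so that it can be telescoped over `range (n + 1)`. -/
def prefixSum (α : QIdx n) (t : ℕ) : ℤ := ∑ j : Fin n, if (j : ℕ) < t then (α j : ℤ) else 0

lemma prefixSum_zero (α : QIdx n) : prefixSum α 0 = 0 := by simp [prefixSum]

lemma prefixSum_self (α : QIdx n) : prefixSum α n = totSum α := by simp [prefixSum, totSum]

lemma prefixSum_val (α : QIdx n) (i : Fin n) : prefixSum α i = lowSum i α := by
  simp only [prefixSum, lowSum, Fin.lt_def]

lemma prefixSum_val_succ (α : QIdx n) (i : Fin n) :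
    prefixSum α (i + 1) = lowSum i α + α i := by
  have hαi : (α i : ℤ) = ∑ j, if j = i then (α j : ℤ) else 0 := by simp
  rw [hαi, prefixSum, lowSum, ← Finset.sum_add_distrib]
  refine Finset.sum_congr rfl fun j _ => ?_
  rcases lt_trichotomy j i with h | rfl | h
  · simp [h, h.ne, Nat.lt_succ_of_lt (Fin.lt_def.mp h)]
  · simp
  · simp [h.not_gt, h.ne', Nat.not_lt.mpr (Nat.succ_le_of_lt (Fin.lt_def.mp h))]

def xLₗ (q : ℝ) (i : Fin n) : Module.End ℂ (QPoly n) where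
  toFun := xL q i
  map_add' f g := by funext α; by_cases h : α i = 0 <;> simp [xL, h, mul_add]
  map_smul' c f := by funext α; by_cases h : α i = 0 <;> simp [xL, h, mul_left_comm]

def dRₗ (q : ℝ) (i : Fin n) : Module.End ℂ (QPoly n) where
  toFun := dR q i
  map_add' f g := by funext α; simp [dR, mul_add]
  map_smul' c f := by funext α; simp [dR, mul_left_comm]

@[simp]
lemma xLₗ_apply (i : Fin n) (f : QPoly n) : xLₗ q i f = xL q i f := rfl

@[simp]
lemma dRₗ_apply (i : Fin n) (f : QPoly n) : dRₗ q i f = dR q i f := rfl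

def QhatLₗ (q : ℝ) : Module.End ℂ (QPoly n) :=
  ∑ i : Fin n, (q : ℂ) ^ (-((i : ℕ) : ℤ)) • (xLₗ q i * xLₗ q i)

def qLapₗ (q : ℝ) : Module.End ℂ (QPoly n) :=
  ∑ i : Fin n, (q : ℂ) ^ ((n : ℤ) - 1 - ((i : ℕ) : ℤ)) • (dRₗ q i * dRₗ q i)

lemma coe_QhatLₗ : ⇑(QhatLₗ q : Module.End ℂ (QPoly n)) = QhatL q := by
  funext f; simp [QhatLₗ, QhatL]

lemma coe_qLapₗ : ⇑(qLapₗ q : Module.End ℂ (QPoly n)) = qLap q := by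
  funext f; simp [qLapₗ, qLap]

/-- `{q^e γ²}_q`, acting on `x^α` as multiplication by `[e + 2|α|]_q`. -/
@[simps]
def gammaSqBracket (q : ℝ) (e : ℤ) : Module.End ℂ (QPoly n) where
  toFun f α := qNum q (e + 2 * totSum α) * f α
  map_add' f g := by funext α; simp [mul_add]
  map_smul' c f := by funext α; simp [mul_left_comm]

lemma gammaSqBracket_apply_eq (hq : q ≠ 0) (e : ℤ) (f : QPoly n) :
    gammaSqBracket q e f = ((q : ℂ) - (q : ℂ)⁻¹)⁻¹ •
      ((q : ℂ) ^ e • gamAll q (gamAll q f) - (q : ℂ) ^ (-e) • gamAllInv q (gamAllInv q f)) := by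
  have hq' : (q : ℂ) ≠ 0 := Complex.ofReal_ne_zero.mpr hq
  funext α
  simp only [gammaSqBracket_apply, gamAll, gamAllInv, qNum, Pi.smul_apply, Pi.sub_apply,
    smul_eq_mul, ← mul_assoc, ← zpow_add₀ hq']
  ring_nf

lemma xL_xL_apply (i : Fin n) (f : QPoly n) (α : QIdx n) :
    xL q i (xL q i f) α = if α i < 2 then 0 else
      (q : ℂ) ^ (-lowSum i α) * ((q : ℂ) ^ (-lowSum i α) * f (α - Finsupp.single i 2)) := by
  rcases Nat.lt_or_ge (α i) 2 with h | h
  · interval_cases hα : α i <;> simp [xL, hα]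
  · have h1 : 1 ≤ α i := by omega
    have hlow : lowSum i (α - Finsupp.single i 1) = lowSum i α := by
      simp [map_tsub_single (lowSum_add i) h1]
    have hsub : α - Finsupp.single i 1 - Finsupp.single i 1 = α - Finsupp.single i 2 := by
      rw [tsub_tsub, ← Finsupp.single_add]
    simp [xL, hlow, hsub, show α i ≠ 0 by omega, show α i - 1 ≠ 0 by omega, h.not_gt]

lemma dR_dR_apply (i : Fin n) (f : QPoly n) (α : QIdx n) :
    dR q i (dR q i f) α = qNum q (α i + 1) * (q : ℂ) ^ highSum i α *
      (qNum q (α i + 2) * (q : ℂ) ^ highSum i α * f (α + Finsupp.single i 2)) := by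
  simp [dR, highSum_add, add_assoc, ← Finsupp.single_add]

lemma commute_dRₗ_xLₗ (hq : q ≠ 0) {i j : Fin n} (hij : i ≠ j) :
    Commute (dRₗ q i) (xLₗ q j) := by
  have hq' : (q : ℂ) ≠ 0 := Complex.ofReal_ne_zero.mpr hq
  refine LinearMap.ext fun f => funext fun α => ?_
  have hαj : (α + Finsupp.single i 1 : QIdx n) j = α j := by simp [hij]
  simp only [Module.End.mul_apply, dRₗ_apply, xLₗ_apply, dR, xL, hαj]
  split_ifs with h0
  · simp
  have hαi : (α - Finsupp.single j 1 : QIdx n) i = α i := by simp [hij.symm]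
  have hshift : α + Finsupp.single i 1 - Finsupp.single j 1
      = α - Finsupp.single j 1 + Finsupp.single i 1 :=
    (tsub_add_eq_add_tsub (Finsupp.single_le_iff.mpr (by omega))).symm
  rw [hαi, hshift, lowSum_add, map_tsub_single (highSum_add i) (by omega : 1 ≤ α j),
    lowSum_single, highSum_single, neg_add, sub_eq_add_neg (highSum i α), zpow_add₀ hq',
    zpow_add₀ hq']
  ring

lemma dR_dR_xL_xL_sub_xL_xL_dR_dR_apply (hq : q ≠ 0) (i : Fin n) (f : QPoly n) (α : QIdx n) :
    dR q i (dR q i (xL q i (xL q i f))) α - xL q i (xL q i (dR q i (dR q i f))) α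
      = qNum q 2 * qNum q (2 * α i + 1)
          * (q : ℂ) ^ (2 * (highSum i α - lowSum i α)) * f α := by
  have hq' : (q : ℂ) ≠ 0 := Complex.ofReal_ne_zero.mpr hq
  have hpow : (q : ℂ) ^ (2 * (highSum i α - lowSum i α))
      = (q : ℂ) ^ highSum i α * (q : ℂ) ^ highSum i α
          * ((q : ℂ) ^ (-lowSum i α) * (q : ℂ) ^ (-lowSum i α)) := by
    simp only [← zpow_add₀ hq']
    ring_nf
  have hDX : dR q i (dR q i (xL q i (xL q i f))) α
      = qNum q (α i + 1) * qNum q (α i + 2)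
          * (q : ℂ) ^ (2 * (highSum i α - lowSum i α)) * f α := by
    rw [dR_dR_apply, xL_xL_apply, if_neg (by simp), add_tsub_cancel_right]
    simp only [lowSum_add, lowSum_single, lt_irrefl, if_false, add_zero]
    rw [hpow]
    ring
  have hXD : xL q i (xL q i (dR q i (dR q i f))) α
      = qNum q (α i - 1) * qNum q (α i)
          * (q : ℂ) ^ (2 * (highSum i α - lowSum i α)) * f α := by
    rw [xL_xL_apply]
    split_ifs with h
    · interval_cases hα : α i <;> simp [qNum]
    · have h2 : 2 ≤ α i := by omega
      rw [dR_dR_apply, tsub_add_cancel_of_le (Finsupp.single_le_iff.mpr h2),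
        map_tsub_single (highSum_add i) h2]
      simp only [Finsupp.tsub_apply, Finsupp.single_eq_same, highSum_single, lt_irrefl,
        if_false, sub_zero, Nat.cast_sub h2]
      rw [hpow]
      ring_nf
  rw [hDX, hXD, ← sub_mul, ← sub_mul, qNum_add_one_mul_qNum_add_two_sub hq]

lemma sum_zpow_mul_qNum_two_mul_add_one (hq : q ≠ 0) (α : QIdx n) :
    ∑ i : Fin n, (q : ℂ) ^ ((n : ℤ) - 1 - 2 * i + 2 * (highSum i α - lowSum i α))
        * qNum q (2 * α i + 1)
      = qNum q (n + 2 * totSum α) := by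
  set E : ℕ → ℤ := fun t => n - 2 * t + 2 * totSum α - 4 * prefixSum α t with hE
  have hterm : ∀ i : Fin n,
      (q : ℂ) ^ ((n : ℤ) - 1 - 2 * i + 2 * (highSum i α - lowSum i α)) * qNum q (2 * α i + 1)
        = ((q : ℂ) ^ E i - (q : ℂ) ^ E (i + 1)) / ((q : ℂ) - (q : ℂ)⁻¹) := by
    intro i
    have hsum := highSum_add_apply_add_lowSum i α
    rw [zpow_mul_qNum hq]
    simp only [hE, prefixSum_val, prefixSum_val_succ]
    push_cast
    congr 3 <;> linarith
  rw [Finset.sum_congr rfl fun i _ => hterm i,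
    Fin.sum_univ_eq_sum_range (fun t => ((q : ℂ) ^ E t - (q : ℂ) ^ E (t + 1)) / _) n,
    ← Finset.sum_div, Finset.sum_range_sub']
  simp only [hE, prefixSum_zero, prefixSum_self, qNum]
  ring_nf

lemma qLapₗ_mul_QhatLₗ_sub (hq : q ≠ 0) :
    qLapₗ q * QhatLₗ q - QhatLₗ q * qLapₗ q
      = qNum q 2 • (gammaSqBracket q n : Module.End ℂ (QPoly n)) := by
  set D : Fin n → Module.End ℂ (QPoly n) := fun i => dRₗ q i * dRₗ q i
  set X : Fin n → Module.End ℂ (QPoly n) := fun i => xLₗ q i * xLₗ q i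
  set c : Fin n → ℂ := fun i => (q : ℂ) ^ ((n : ℤ) - 1 - ((i : ℕ) : ℤ))
  set c' : Fin n → ℂ := fun i => (q : ℂ) ^ (-((i : ℕ) : ℤ))
  have hoff : ∀ i j, i ≠ j → D i * X j - X j * D i = 0 := fun i j hij => by
    have h := commute_dRₗ_xLₗ hq hij
    exact sub_eq_zero.mpr ((h.mul_right h).mul_left (h.mul_right h)).eq
  have hdiag : qLapₗ q * QhatLₗ q - QhatLₗ q * qLapₗ q
      = ∑ i, (c i * c' i) • (D i * X i - X i * D i) := by
    calc qLapₗ q * QhatLₗ q - QhatLₗ q * qLapₗ q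
        = ∑ i, ∑ j, (c i * c' j) • (D i * X j - X j * D i) := by
          simp only [qLapₗ, QhatLₗ, Finset.sum_mul_sum, smul_mul_smul_comm, smul_sub,
            Finset.sum_sub_distrib]
          congr 1
          rw [Finset.sum_comm]
          simp only [c, c', D, X, mul_comm]
      _ = _ := Finset.sum_congr rfl fun i _ =>
          Finset.sum_eq_single i (fun j _ hji => by rw [hoff i j (Ne.symm hji), smul_zero])
            (by simp)
  refine hdiag.trans (LinearMap.ext fun f => funext fun α => ?_)
  simp only [LinearMap.sum_apply, Finset.sum_apply, LinearMap.smul_apply, LinearMap.sub_apply,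
    Module.End.mul_apply, Pi.smul_apply, Pi.sub_apply, smul_eq_mul, D, X, c, c', dRₗ_apply,
    xLₗ_apply, dR_dR_xL_xL_sub_xL_xL_dR_dR_apply hq, gammaSqBracket_apply]
  rw [← sum_zpow_mul_qNum_two_mul_add_one hq α, Finset.sum_mul, Finset.mul_sum]
  refine Finset.sum_congr rfl fun i _ => ?_
  have hq' : (q : ℂ) ≠ 0 := Complex.ofReal_ne_zero.mpr hq
  rw [show (n : ℤ) - 1 - 2 * i + 2 * (highSum i α - lowSum i α)
      = (n - 1 - i) + -i + 2 * (highSum i α - lowSum i α) by ring, zpow_add₀ hq', zpow_add₀ hq']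
  ring

lemma gammaSqBracket_mul_xLₗ_mul_xLₗ (e : ℤ) (i : Fin n) :
    gammaSqBracket q e * (xLₗ q i * xLₗ q i) = xLₗ q i * xLₗ q i * gammaSqBracket q (e + 4) := by
  refine LinearMap.ext fun f => funext fun α => ?_
  simp only [Module.End.mul_apply, xLₗ_apply, gammaSqBracket_apply, xL_xL_apply]
  split_ifs with h
  · simp
  · rw [map_tsub_single totSum_add (not_lt.mp h), totSum_single]
    ring_nf

lemma gammaSqBracket_mul_QhatLₗ (e : ℤ) :
    gammaSqBracket q e * QhatLₗ q
      = QhatLₗ q * (gammaSqBracket q (e + 4) : Module.End ℂ (QPoly n)) := by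
  simp only [QhatLₗ, Finset.mul_sum, Finset.sum_mul, mul_smul_comm, smul_mul_assoc,
    gammaSqBracket_mul_xLₗ_mul_xLₗ]

lemma gammaSqBracket_mul_QhatLₗ_pow (e : ℤ) (m : ℕ) :
    gammaSqBracket q e * QhatLₗ q ^ m
      = QhatLₗ q ^ m * (gammaSqBracket q (e + 4 * m) : Module.End ℂ (QPoly n)) := by
  induction m generalizing e with
  | zero => simp
  | succ m ih =>
    rw [pow_succ', ← mul_assoc, gammaSqBracket_mul_QhatLₗ, mul_assoc, ih, ← mul_assoc,
      ← pow_succ', add_assoc, Nat.cast_succ, mul_add_one, add_comm 4]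

lemma qNum_smul_gammaSqBracket_add (hq : q ≠ 0) (m a : ℤ) :
    qNum q m • gammaSqBracket q a + qNum q 2 • gammaSqBracket q (a + m + 2)
      = qNum q (m + 2) • (gammaSqBracket q (a + 2) : Module.End ℂ (QPoly n)) := by
  refine LinearMap.ext fun f => funext fun α => ?_
  simp only [LinearMap.add_apply, LinearMap.smul_apply, Pi.add_apply, Pi.smul_apply,
    gammaSqBracket_apply, smul_eq_mul]
  have h := qNum_mul_qNum_add_qNum_two_mul hq m (a + 2 * totSum α)
  rw [show a + 2 * totSum α + m + 2 = a + m + 2 + 2 * totSum α by ring,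
    show a + 2 * totSum α + 2 = a + 2 + 2 * totSum α by ring] at h
  linear_combination f α * h

lemma qLapₗ_mul_QhatLₗ_pow_sub (hq : q ≠ 0) (k : ℕ) :
    qLapₗ q * QhatLₗ q ^ (k + 1) - QhatLₗ q ^ (k + 1) * qLapₗ q
      = qNum q (2 * k + 2) •
          (QhatLₗ q ^ k * (gammaSqBracket q (2 * k + n) : Module.End ℂ (QPoly n))) := by
  induction k with
  | zero => simpa using qLapₗ_mul_QhatLₗ_sub hq
  | succ k ih =>
    set L := (qLapₗ q : Module.End ℂ (QPoly n))
    set Q := (QhatLₗ q : Module.End ℂ (QPoly n))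
    calc L * Q ^ (k + 2) - Q ^ (k + 2) * L
        = (L * Q - Q * L) * Q ^ (k + 1) + Q * (L * Q ^ (k + 1) - Q ^ (k + 1) * L) := by
          rw [pow_succ' Q (k + 1)]
          simp only [mul_sub, sub_mul, mul_assoc]
          abel
      _ = Q ^ (k + 1) * (qNum q (2 * k + 2) • gammaSqBracket q (2 * k + n)
            + qNum q 2 • gammaSqBracket q (n + 4 * (k + 1 : ℕ))) := by
          rw [qLapₗ_mul_QhatLₗ_sub hq, ih, smul_mul_assoc, gammaSqBracket_mul_QhatLₗ_pow,
            mul_smul_comm, ← mul_assoc, ← pow_succ', mul_add, mul_smul_comm, mul_smul_comm,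
            add_comm]
      _ = _ := by
          rw [show (n : ℤ) + 4 * (k + 1 : ℕ) = 2 * k + n + (2 * k + 2) + 2 by push_cast; ring,
            qNum_smul_gammaSqBracket_add hq, mul_smul_comm]
          push_cast
          ring_nf

end QRadiusCommutator

theorem qLaplacian_Qhat_commutator_general (n : ℕ) (q : ℝ) (hq : 0 < q)
    (k : ℕ) (hk : 1 ≤ k) :
    ∀ f : QPoly n,
      qLap q ((QhatL q)^[k] f) - (QhatL q)^[k] (qLap q f)
        = qNum q (2 * (k : ℤ)) •
            (QhatL q)^[k - 1]
              (((q : ℂ) - (q : ℂ)⁻¹)⁻¹ •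
                ((q : ℂ) ^ (2 * (k : ℤ) + (n : ℤ) - 2) • gamAll q (gamAll q f)
                  - (q : ℂ) ^ (-(2 * (k : ℤ) + (n : ℤ) - 2)) • gamAllInv q (gamAllInv q f))) := by
  intro f
  obtain ⟨k, rfl⟩ := Nat.exists_eq_add_of_le' hk
  have h := LinearMap.congr_fun (qLapₗ_mul_QhatLₗ_pow_sub hq.ne' k) f
  simp only [LinearMap.sub_apply, Module.End.mul_apply, LinearMap.smul_apply,
    Module.End.pow_apply, coe_qLapₗ, coe_QhatLₗ] at h
  rw [h, Nat.add_sub_cancel, ← gammaSqBracket_apply_eq hq.ne']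
  push_cast
  ring_nf

/-- `Δ_qᴿ (Q̂ᴸ)^k − (Q̂ᴸ)^k Δ_qᴿ = (Q̂ᴸ)^{k−1} [2k]_q {q^{2k+n−2} γ²}_q`,
where `{a}_q = (a − a⁻¹)/(q − q⁻¹)`. -/
theorem qLaplacian_Qhat_commutator (n : ℕ) (q : ℝ) (hq : 0 < q) (hq1 : q ≠ 1)
    (k : ℕ) (hk : 1 ≤ k) :
    ∀ f : QPoly n,
      qLap q ((QhatL q)^[k] f) - (QhatL q)^[k] (qLap q f)
        = qNum q (2 * (k : ℤ)) •
            (QhatL q)^[k - 1]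
              (((q : ℂ) - (q : ℂ)⁻¹)⁻¹ •
                ((q : ℂ) ^ (2 * (k : ℤ) + (n : ℤ) - 2) • gamAll q (gamAll q f)
                  - (q : ℂ) ^ (-(2 * (k : ℤ) + (n : ℤ) - 2)) • gamAllInv q (gamAllInv q f))) :=
  qLaplacian_Qhat_commutator_general n q hq k hk
end
end

section
/- In the case n = 2, with z_r = x₁ + i q^r x₂ and z_q^m = z₀z₁⋯z_{m−1} in the q-commutative algebra ℂ⟨x₁,x₂⟩/(x₁x₂ − q x₂x₁), one has ∂₁ᴿ z_q^m = [m]_q z₁z₂⋯z_{m−1} and ∂₂ᴿ z_q^m = i [m]_q z₁z₂⋯z_{m−1}. -/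
noncomputable section

/-- `z_r = x₁ + i q^r x₂` in the q-plane (`n = 2`). -/
def zvar (q : ℝ) (r : ℕ) : QPoly 2 :=
  Xvar 0 + (Complex.I * (q : ℂ) ^ (r : ℤ)) • Xvar 1

/-- `z̄_r = x₁ − i q^r x₂`. -/
def zbar (q : ℝ) (r : ℕ) : QPoly 2 :=
  Xvar 0 - (Complex.I * (q : ℂ) ^ (r : ℤ)) • Xvar 1

/-- `z_s z_{s+1} ⋯ z_{s+m-1}`. -/
def zProd (q : ℝ) : ℕ → ℕ → QPoly 2
  | _, 0 => qOne
  | s, m + 1 => qMul q (zvar q s) (zProd q (s + 1) m)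

/-- `z̄_s z̄_{s+1} ⋯ z̄_{s+m-1}`. -/
def zbProd (q : ℝ) : ℕ → ℕ → QPoly 2
  | _, 0 => qOne
  | s, m + 1 => qMul q (zbar q s) (zbProd q (s + 1) m)


/-!
Multiplying out `z_s z_{s+1} ⋯ z_{s+m-1}` one factor at a time, with `z_r` acting by
`x₁ᴸ + i q^r x₂ᴸ`, its coefficient of `x₁^{m-b} x₂^b` is `i^b q^{sb + b(b-1)/2}` times the
symmetric Gaussian binomial `[m choose b]_q`; the recursion is the q-Pascal rule
`[m+1] = q^{b+1}[m-b] + q^{b-m}[b+1]`. Since `∂ᵢᴿ` acts diagonally on monomials, both identities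
then reduce coefficientwise to the absorption rules `[m+1-b]·[m+1 choose b] = [m+1]·[m choose b]`
and `[b+1]·[m+1 choose b+1] = [m+1]·[m choose b]`; the factor `q^b` produced by `∂₁ᴿ` is exactly
what turns `s = 0` into `s = 1`.
-/

open Finset

theorem qNum_zero_right (q : ℝ) : qNum q 0 = 0 := by simp [qNum]

theorem qNum_ne_zero {q : ℝ} (hq : 0 < q) (hq1 : q ≠ 1) {k : ℤ} (hk : k ≠ 0) :
    qNum q k ≠ 0 := by
  have hinj := zpow_right_injective₀ hq hq1
  simp only [qNum, ← Complex.ofReal_zpow, ← Complex.ofReal_inv, ← Complex.ofReal_sub,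
    ← Complex.ofReal_div, Complex.ofReal_ne_zero, div_ne_zero_iff, sub_ne_zero]
  refine ⟨fun h => hk (by have := hinj h; omega), fun h => ?_⟩
  have := @hinj 1 (-1) (by simpa using h)
  omega

theorem qNum_add_one {q : ℝ} (hq : q ≠ 0) (m b : ℤ) :
    qNum q (m + 1) = (q : ℂ) ^ (b + 1) * qNum q (m - b) + (q : ℂ) ^ (b - m) * qNum q (b + 1) := by
  have hX : (q : ℂ) ≠ 0 := Complex.ofReal_ne_zero.mpr hq
  simp only [qNum, ← mul_div_assoc, ← add_div, mul_sub, ← zpow_add₀ hX]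
  ring_nf

def qDescFactorial (q : ℝ) (m : ℤ) (b : ℕ) : ℂ := ∏ j ∈ range b, qNum q (m - j)

def qFactorial (q : ℝ) (b : ℕ) : ℂ := ∏ j ∈ range b, qNum q (j + 1)

def qBinom (q : ℝ) (m b : ℕ) : ℂ := qDescFactorial q m b / qFactorial q b

theorem qDescFactorial_succ (q : ℝ) (m : ℤ) (b : ℕ) :
    qDescFactorial q m (b + 1) = qDescFactorial q m b * qNum q (m - b) :=
  prod_range_succ _ _

theorem qDescFactorial_add_one_succ (q : ℝ) (m : ℤ) (b : ℕ) :
    qDescFactorial q (m + 1) (b + 1) = qNum q (m + 1) * qDescFactorial q m b := by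
  rw [qDescFactorial, prod_range_succ', mul_comm, qDescFactorial]
  congr 1
  · simp
  · exact prod_congr rfl fun j _ => by push_cast; ring_nf

theorem qFactorial_succ (q : ℝ) (b : ℕ) :
    qFactorial q (b + 1) = qFactorial q b * qNum q (b + 1) := by
  rw [qFactorial, prod_range_succ]; rfl

theorem qFactorial_ne_zero {q : ℝ} (hq : 0 < q) (hq1 : q ≠ 1) (b : ℕ) : qFactorial q b ≠ 0 :=
  prod_ne_zero_iff.mpr fun j _ => qNum_ne_zero hq hq1 (by omega)

theorem qBinom_zero_right (q : ℝ) (m : ℕ) : qBinom q m 0 = 1 := by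
  simp [qBinom, qDescFactorial, qFactorial]

theorem qBinom_eq_zero_of_lt (q : ℝ) {m b : ℕ} (h : m < b) : qBinom q m b = 0 := by
  rw [qBinom, qDescFactorial, prod_eq_zero (mem_range.mpr h), zero_div]
  simp [qNum_zero_right]

theorem qBinom_succ_succ {q : ℝ} (hq : 0 < q) (hq1 : q ≠ 1) (m b : ℕ) :
    qBinom q (m + 1) (b + 1) =
      (q : ℂ) ^ ((b : ℤ) + 1) * qBinom q m (b + 1) + (q : ℂ) ^ ((b : ℤ) - m) * qBinom q m b := by
  have hD := qFactorial_ne_zero hq hq1 b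
  have hb : qNum q ((b : ℤ) + 1) ≠ 0 := qNum_ne_zero hq hq1 (by omega)
  simp only [qBinom, Nat.cast_add_one]
  rw [qDescFactorial_add_one_succ, qDescFactorial_succ, qFactorial_succ]
  field_simp
  linear_combination qDescFactorial q m b * qNum_add_one hq.ne' m b

theorem qNum_sub_mul_qBinom_succ (q : ℝ) (m b : ℕ) :
    qNum q ((m : ℤ) + 1 - b) * qBinom q (m + 1) b = qNum q ((m : ℤ) + 1) * qBinom q m b := by
  simp only [qBinom, ← mul_div_assoc, Nat.cast_add_one]
  rw [← qDescFactorial_add_one_succ, qDescFactorial_succ, mul_comm]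

theorem qNum_succ_mul_qBinom_succ_succ {q : ℝ} (hq : 0 < q) (hq1 : q ≠ 1) (m b : ℕ) :
    qNum q ((b : ℤ) + 1) * qBinom q (m + 1) (b + 1) = qNum q ((m : ℤ) + 1) * qBinom q m b := by
  have hb : qNum q ((b : ℤ) + 1) ≠ 0 := qNum_ne_zero hq hq1 (by omega)
  have hD := qFactorial_ne_zero hq hq1 b
  simp only [qBinom, Nat.cast_add_one, qDescFactorial_add_one_succ, qFactorial_succ]
  field_simp

section QAlgebra

variable {n : ℕ}

theorem qMul_add_left (q : ℝ) (f g h : QPoly n) :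
    qMul q (f + g) h = qMul q f h + qMul q g h := by
  funext α
  simp only [qMul, Pi.add_apply, mul_add, add_mul, sum_add_distrib]

theorem qMul_smul_left (q : ℝ) (c : ℂ) (f g : QPoly n) :
    qMul q (c • f) g = c • qMul q f g := by
  funext α
  simp only [qMul, Pi.smul_apply, smul_eq_mul, mul_sum]
  exact sum_congr rfl fun _ _ => by ring

theorem qMul_mono_left (q : ℝ) (δ : QIdx n) (g : QPoly n) (α : QIdx n) :
    qMul q (mono δ) g α = if δ ≤ α then (q : ℂ) ^ qExp δ (α - δ) * g (α - δ) else 0 := by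
  have hsupp : ∀ p ∈ antidiagonal α,
      (q : ℂ) ^ qExp p.1 p.2 * mono δ p.1 * g p.2 ≠ 0 → p.1 = δ := fun p _ hp => by
    by_contra h
    simp [mono, h] at hp
  rw [qMul, ← sum_filter_of_ne hsupp]
  rw [HasAntidiagonal.filter_fst_eq_antidiagonal α δ, sum_ite_index]
  simp [mono]

theorem qExp_single_one_left (i : Fin n) (β : QIdx n) :
    qExp (Finsupp.single i 1) β = -lowSum i β := by
  rw [qExp, lowSum, Fintype.sum_eq_single i fun k hk => by simp [Ne.symm hk]]
  simp

theorem lowSum_tsub_single (i : Fin n) (α : QIdx n) (k : ℕ) :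
    lowSum i (α - Finsupp.single i k) = lowSum i α := by
  refine sum_congr rfl fun j _ => ?_
  split_ifs with h
  · simp [h.ne']
  · rfl

theorem qMul_Xvar_left (q : ℝ) (i : Fin n) (f : QPoly n) : qMul q (Xvar i) f = xL q i f := by
  funext α
  rw [Xvar, qMul_mono_left, xL, qExp_single_one_left, lowSum_tsub_single]
  by_cases h : α i = 0 <;> simp [h, Finsupp.single_le_iff, Nat.one_le_iff_ne_zero]

end QAlgebra

theorem lowSum_zero {n : ℕ} (α : QIdx (n + 1)) : lowSum 0 α = 0 := by
  simp [lowSum]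

theorem lowSum_one_of_two (α : QIdx 2) : lowSum 1 α = α 0 := by
  simp [lowSum]

theorem highSum_zero_of_two (α : QIdx 2) : highSum 0 α = α 1 := by
  simp [highSum, Fin.sum_univ_two]

theorem highSum_one_of_two (α : QIdx 2) : highSum 1 α = 0 := by
  simp [highSum, Fin.sum_univ_two]

theorem zProd_succ (q : ℝ) (s m : ℕ) :
    zProd q s (m + 1) =
      xL q 0 (zProd q (s + 1) m) +
        (Complex.I * (q : ℂ) ^ (s : ℤ)) • xL q 1 (zProd q (s + 1) m) := by
  rw [zProd, zvar, qMul_add_left, qMul_smul_left, qMul_Xvar_left, qMul_Xvar_left]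

def zProdCoeff (q : ℝ) (s m b : ℕ) : ℂ :=
  Complex.I ^ b * (q : ℂ) ^ ((s : ℤ) * b + (b.choose 2 : ℕ)) * qBinom q m b

theorem zProdCoeff_zero_right (q : ℝ) (s m : ℕ) : zProdCoeff q s m 0 = 1 := by
  simp [zProdCoeff, qBinom_zero_right]

theorem zProdCoeff_eq_zero_of_lt (q : ℝ) (s : ℕ) {m b : ℕ} (h : m < b) :
    zProdCoeff q s m b = 0 := by
  simp [zProdCoeff, qBinom_eq_zero_of_lt q h]

theorem zProdCoeff_succ_succ {q : ℝ} (hq : 0 < q) (hq1 : q ≠ 1) (s m b : ℕ) :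
    zProdCoeff q s (m + 1) (b + 1) =
      zProdCoeff q (s + 1) m (b + 1) +
        Complex.I * (q : ℂ) ^ (s : ℤ) * (q : ℂ) ^ ((b : ℤ) - m) * zProdCoeff q (s + 1) m b := by
  have hX : (q : ℂ) ≠ 0 := Complex.ofReal_ne_zero.mpr hq.ne'
  have hc : ((b + 1).choose 2 : ℤ) = b.choose 2 + b := by
    rw [Nat.choose_succ_succ', Nat.choose_one_right]; push_cast; ring
  have h₁ : (q : ℂ) ^ ((s : ℤ) * (b + 1) + ((b + 1).choose 2 : ℕ)) * (q : ℂ) ^ ((b : ℤ) + 1) =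
      (q : ℂ) ^ (((s : ℤ) + 1) * (b + 1) + ((b + 1).choose 2 : ℕ)) := by
    rw [← zpow_add₀ hX]; ring_nf
  have h₂ : (q : ℂ) ^ ((s : ℤ) * (b + 1) + ((b + 1).choose 2 : ℕ)) * (q : ℂ) ^ ((b : ℤ) - m) =
      (q : ℂ) ^ (s : ℤ) * (q : ℂ) ^ ((b : ℤ) - m) *
        (q : ℂ) ^ (((s : ℤ) + 1) * b + (b.choose 2 : ℕ)) := by
    rw [← zpow_add₀ hX, ← zpow_add₀ hX, ← zpow_add₀ hX, hc]; ring_nf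
  simp only [zProdCoeff, qBinom_succ_succ hq hq1, Nat.cast_add_one]
  linear_combination Complex.I ^ (b + 1) * (qBinom q m (b + 1) * h₁ + qBinom q m b * h₂)

theorem zProd_apply {q : ℝ} (hq : 0 < q) (hq1 : q ≠ 1) (m s : ℕ) (α : QIdx 2) :
    zProd q s m α = if α 0 + α 1 = m then zProdCoeff q s m (α 1) else 0 := by
  induction m generalizing s α with
  | zero =>
    simp only [zProd, qOne, Finsupp.ext_iff, Fin.forall_fin_two, Finsupp.coe_zero, Pi.zero_apply,
      Nat.add_eq_zero_iff]
    split_ifs with h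
    · rw [h.2, zProdCoeff_zero_right]
    · rfl
  | succ m ih =>
    simp only [zProd_succ, Pi.add_apply, Pi.smul_apply, smul_eq_mul, xL, ih, lowSum_zero,
      lowSum_one_of_two, Finsupp.tsub_apply, Finsupp.single_apply, zero_ne_one, one_ne_zero,
      if_true, if_false, neg_zero, zpow_zero, one_mul, tsub_zero]
    generalize α 0 = a
    cases α 1 with
    | zero => split_ifs <;> first | omega | simp [zProdCoeff_zero_right]
    | succ b =>
      simp only [Nat.add_one_ne_zero, if_false, Nat.add_sub_cancel]
      by_cases h : a + b = m
      · rw [if_pos h, if_pos (show a + (b + 1) = m + 1 by omega), zProdCoeff_succ_succ hq hq1,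
          show -(a : ℤ) = b - m by omega]
        rcases Nat.eq_zero_or_pos a with rfl | ha
        · rw [if_pos rfl, zProdCoeff_eq_zero_of_lt q (s + 1) (show m < b + 1 by omega)]
          ring
        · rw [if_neg ha.ne', if_pos (by omega)]
          ring
      · rw [if_neg h, if_neg (show a + (b + 1) ≠ m + 1 by omega), mul_zero, mul_zero, add_zero,
          ite_eq_left_iff]
        intro ha
        rw [if_neg (by omega)]

theorem qNum_mul_zProdCoeff_zero {q : ℝ} (hq : q ≠ 0) (a b : ℕ) :
    qNum q ((a : ℤ) + 1) * (q : ℂ) ^ (b : ℤ) * zProdCoeff q 0 (a + b + 1) b =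
      qNum q (((a + b : ℕ) : ℤ) + 1) * zProdCoeff q 1 (a + b) b := by
  have hX : (q : ℂ) ≠ 0 := Complex.ofReal_ne_zero.mpr hq
  have hbinom := qNum_sub_mul_qBinom_succ q (a + b) b
  rw [show ((a + b : ℕ) : ℤ) + 1 - b = a + 1 by push_cast; ring] at hbinom
  have hpow : (q : ℂ) ^ (b : ℤ) * (q : ℂ) ^ (((0 : ℕ) : ℤ) * b + (b.choose 2 : ℕ)) =
      (q : ℂ) ^ (((1 : ℕ) : ℤ) * b + (b.choose 2 : ℕ)) := by
    rw [← zpow_add₀ hX]; ring_nf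
  simp only [zProdCoeff]
  linear_combination Complex.I ^ b * (qNum q ((a : ℤ) + 1) * qBinom q (a + b + 1) b * hpow +
    (q : ℂ) ^ (((1 : ℕ) : ℤ) * b + (b.choose 2 : ℕ)) * hbinom)

theorem qNum_mul_zProdCoeff_zero_succ {q : ℝ} (hq : 0 < q) (hq1 : q ≠ 1) (a b : ℕ) :
    qNum q ((b : ℤ) + 1) * zProdCoeff q 0 (a + b + 1) (b + 1) =
      Complex.I * qNum q (((a + b : ℕ) : ℤ) + 1) * zProdCoeff q 1 (a + b) b := by
  have hbinom := qNum_succ_mul_qBinom_succ_succ hq hq1 (a + b) b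
  have hpow : (q : ℂ) ^ (((0 : ℕ) : ℤ) * (b + 1 : ℕ) + ((b + 1).choose 2 : ℕ)) =
      (q : ℂ) ^ (((1 : ℕ) : ℤ) * b + (b.choose 2 : ℕ)) := by
    rw [Nat.choose_succ_succ', Nat.choose_one_right]; push_cast; ring_nf
  simp only [zProdCoeff, hpow, pow_succ]
  linear_combination Complex.I ^ b * Complex.I *
    (q : ℂ) ^ (((1 : ℕ) : ℤ) * b + (b.choose 2 : ℕ)) * hbinom

/-- for `n = 2`, `∂₁ᴿ z_q^m = [m]_q z₁⋯z_{m-1}` and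
`∂₂ᴿ z_q^m = i [m]_q z₁⋯z_{m-1}`. -/
theorem right_derivatives_of_zq_power (q : ℝ) (hq : 0 < q) (hq1 : q ≠ 1)
    (m : ℕ) (hm : 1 ≤ m) :
    dR q 0 (zProd q 0 m) = qNum q (m : ℤ) • zProd q 1 (m - 1) ∧
    dR q 1 (zProd q 0 m) = (Complex.I * qNum q (m : ℤ)) • zProd q 1 (m - 1) := by
  obtain ⟨m, rfl⟩ : ∃ k, m = k + 1 := ⟨m - 1, by omega⟩
  refine ⟨funext fun α => ?_, funext fun α => ?_⟩ <;>
    simp only [dR, Pi.smul_apply, smul_eq_mul, zProd_apply hq hq1, Finsupp.add_apply,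
      Finsupp.single_apply, zero_ne_one, one_ne_zero, if_true, if_false, add_zero,
      highSum_zero_of_two, highSum_one_of_two, Nat.add_sub_cancel]
  · by_cases h : α 0 + α 1 = m
    · subst h
      rw [if_pos (by omega), if_pos rfl, Nat.cast_succ,
        ← qNum_mul_zProdCoeff_zero hq.ne']
    · rw [if_neg (by omega), if_neg h, mul_zero, mul_zero]
  · by_cases h : α 0 + α 1 = m
    · subst h
      rw [if_pos (by omega), if_pos rfl, zpow_zero, mul_one, Nat.cast_succ,
        ← qNum_mul_zProdCoeff_zero_succ hq hq1]
    · rw [if_neg (by omega), if_neg h, mul_zero, mul_zero]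
end
end
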